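/- Let (R, ·, 𝔢) be a symmetric partial A-module algebra over a regular multiplier Hopf algebra A such that A·R (the linear span of elements a·x) has nondegenerate product. For m ∈ M(R) and a ∈ A, the pair of linear maps on A·R given by (a·m)(b·x) = a₍₁₎·(m(S(a₍₂₎)b·x)) and (b·x)(a·m) = a₍₂₎·((S⁻¹(a₍₁₎)b·x)m) is a well-defined multiplier, i.e. a·m ∈ M(A·R). -/

import Mathlib

/- ## Preliminaries: multiplier algebras and (regular) multiplier Hopf algebras -/

open scoped TensorProduct
open TensorProduct LinearMap
set_option linter.unusedSectionVars false

noncomputable section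

variable (k : Type*) [Field k]

section MultiplierAlgebra

variable (A : Type*) [NonUnitalRing A] [Module k A] [SMulCommClass k A A] [IsScalarTower k A A]

/-- The product of an algebra is *nondegenerate*. -/
def NondegProd : Prop :=
  (∀ a : A, (∀ b : A, a * b = 0) → a = 0) ∧ ∀ b : A, (∀ a : A, a * b = 0) → b = 0

/-- A multiplier of `A`: a pair `(U, V)` of linear maps with `U (a*b) = U a * b`,
`V (a*b) = a * V b` and `V a * b = a * U b`. -/
@[ext] structure Multiplier where
  U : A →ₗ[k] A
  V : A →ₗ[k] A
  U_mul : ∀ a b : A, U (a * b) = U a * b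
  V_mul : ∀ a b : A, V (a * b) = a * V b
  compat : ∀ a b : A, V a * b = a * U b

namespace Multiplier

variable {k A}

instance : Zero (Multiplier k A) := ⟨⟨0, 0, by simp, by simp, by simp⟩⟩
instance : Add (Multiplier k A) :=
  ⟨fun m n => ⟨m.U + n.U, m.V + n.V,
    by simp [m.U_mul, n.U_mul, add_mul],
    by simp [m.V_mul, n.V_mul, mul_add],
    by simp [add_mul, mul_add, m.compat, n.compat]⟩⟩
instance : Neg (Multiplier k A) :=
  ⟨fun m => ⟨-m.U, -m.V, by simp [m.U_mul], by simp [m.V_mul],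
    by simp [m.compat]⟩⟩
instance : SMul k (Multiplier k A) :=
  ⟨fun c m => ⟨c • m.U, c • m.V,
    by simp [m.U_mul, smul_mul_assoc],
    by simp [m.V_mul, mul_smul_comm],
    by simp [smul_mul_assoc, mul_smul_comm, m.compat]⟩⟩

@[simp] lemma zero_U : (0 : Multiplier k A).U = 0 := rfl
@[simp] lemma zero_V : (0 : Multiplier k A).V = 0 := rfl
@[simp] lemma add_U (m n : Multiplier k A) : (m + n).U = m.U + n.U := rfl
@[simp] lemma add_V (m n : Multiplier k A) : (m + n).V = m.V + n.V := rfl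
@[simp] lemma neg_U (m : Multiplier k A) : (-m).U = -m.U := rfl
@[simp] lemma neg_V (m : Multiplier k A) : (-m).V = -m.V := rfl
@[simp] lemma smul_U (c : k) (m : Multiplier k A) : (c • m).U = c • m.U := rfl
@[simp] lemma smul_V (c : k) (m : Multiplier k A) : (c • m).V = c • m.V := rfl

instance : AddCommGroup (Multiplier k A) where
  add_assoc a b c := by ext x <;> simp [add_assoc]
  zero_add a := by ext x <;> simp
  add_zero a := by ext x <;> simp
  add_comm a b := by ext x <;> simp [add_comm]
  neg_add_cancel a := by ext x <;> simp
  nsmul := nsmulRec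
  zsmul := zsmulRec

instance : Module k (Multiplier k A) where
  one_smul m := by ext x <;> simp
  mul_smul c d m := by ext x <;> simp [mul_smul]
  smul_zero c := by ext x <;> simp
  smul_add c m n := by ext x <;> simp
  add_smul c d m := by ext x <;> simp [add_smul]
  zero_smul m := by ext x <;> simp

instance : One (Multiplier k A) := ⟨⟨LinearMap.id, LinearMap.id, by simp, by simp, by simp⟩⟩
instance : Mul (Multiplier k A) :=
  ⟨fun m n => ⟨m.U ∘ₗ n.U, n.V ∘ₗ m.V,
    by simp [n.U_mul, m.U_mul],
    by simp [m.V_mul, n.V_mul],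
    by intro a b; simp only [LinearMap.comp_apply]; rw [n.compat, m.compat]⟩⟩

@[simp] lemma one_U : (1 : Multiplier k A).U = LinearMap.id := rfl
@[simp] lemma one_V : (1 : Multiplier k A).V = LinearMap.id := rfl
@[simp] lemma mul_U (m n : Multiplier k A) : (m * n).U = m.U ∘ₗ n.U := rfl
@[simp] lemma mul_V (m n : Multiplier k A) : (m * n).V = n.V ∘ₗ m.V := rfl

instance : Monoid (Multiplier k A) where
  mul_assoc a b c := by ext x <;> simp
  one_mul a := by ext x <;> simp
  mul_one a := by ext x <;> simp

/-- The canonical map `A → M(A)` given by left and right multiplication. -/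
def incl (a : A) : Multiplier k A :=
  ⟨LinearMap.mulLeft k a, LinearMap.mulRight k a,
    fun b c => by simp [mul_assoc], fun b c => by simp [mul_assoc],
    fun b c => by simp [mul_assoc]⟩

@[simp] lemma incl_U (a b : A) : (incl (k := k) a).U b = a * b := rfl
@[simp] lemma incl_V (a b : A) : (incl (k := k) a).V b = b * a := rfl

/-- The canonical map `A → M(A)` as a linear map. -/
def inclL : A →ₗ[k] Multiplier k A where
  toFun := incl
  map_add' a b := by ext x <;> simp [add_mul, mul_add]
  map_smul' c a := by ext x <;> simp [smul_mul_assoc, mul_smul_comm]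

@[simp] lemma inclL_apply (a : A) : (inclL (k := k) a) = incl a := rfl

/-- The `U`-component, as a linear map. -/
def Ulm : Multiplier k A →ₗ[k] A →ₗ[k] A where
  toFun m := m.U
  map_add' _ _ := rfl
  map_smul' _ _ := rfl

/-- The `V`-component, as a linear map. -/
def Vlm : Multiplier k A →ₗ[k] A →ₗ[k] A where
  toFun m := m.V
  map_add' _ _ := rfl
  map_smul' _ _ := rfl

end Multiplier

end MultiplierAlgebra

section Tensor

variable (R : Type*) [NonUnitalRing R] [Module k R] [SMulCommClass k R R] [IsScalarTower k R R]
variable (A : Type*) [NonUnitalRing A] [Module k A] [SMulCommClass k A A] [IsScalarTower k A A]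

/-- The multiplier `1 ⊗ a` of `R ⊗ A`. -/
def oneT (a : A) : Multiplier k (R ⊗[k] A) where
  U := lTensor R (LinearMap.mulLeft k a)
  V := lTensor R (LinearMap.mulRight k a)
  U_mul u v := by
    induction u with
    | zero => simp
    | add u₁ u₂ h₁ h₂ => simp [add_mul, h₁, h₂]
    | tmul x b =>
      induction v with
      | zero => simp
      | add v₁ v₂ h₁ h₂ => simp [mul_add, h₁, h₂]
      | tmul y c => simp [Algebra.TensorProduct.tmul_mul_tmul, mul_assoc]
  V_mul u v := by
    induction u with
    | zero => simp
    | add u₁ u₂ h₁ h₂ => simp [add_mul, h₁, h₂]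
    | tmul x b =>
      induction v with
      | zero => simp
      | add v₁ v₂ h₁ h₂ => simp [mul_add, h₁, h₂]
      | tmul y c => simp [Algebra.TensorProduct.tmul_mul_tmul, mul_assoc]
  compat u v := by
    induction u with
    | zero => simp
    | add u₁ u₂ h₁ h₂ => simp [add_mul, h₁, h₂]
    | tmul x b =>
      induction v with
      | zero => simp
      | add v₁ v₂ h₁ h₂ => simp only [map_add, mul_add, h₁, h₂]
      | tmul y c => simp [Algebra.TensorProduct.tmul_mul_tmul, mul_assoc]

/-- The multiplier `x ⊗ 1` of `R ⊗ A`. -/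
def tOne (x : R) : Multiplier k (R ⊗[k] A) where
  U := rTensor A (LinearMap.mulLeft k x)
  V := rTensor A (LinearMap.mulRight k x)
  U_mul u v := by
    induction u with
    | zero => simp
    | add u₁ u₂ h₁ h₂ => simp [add_mul, h₁, h₂]
    | tmul y b =>
      induction v with
      | zero => simp
      | add v₁ v₂ h₁ h₂ => simp [mul_add, h₁, h₂]
      | tmul z c => simp [Algebra.TensorProduct.tmul_mul_tmul, mul_assoc]
  V_mul u v := by
    induction u with
    | zero => simp
    | add u₁ u₂ h₁ h₂ => simp [add_mul, h₁, h₂]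
    | tmul y b =>
      induction v with
      | zero => simp
      | add v₁ v₂ h₁ h₂ => simp [mul_add, h₁, h₂]
      | tmul z c => simp [Algebra.TensorProduct.tmul_mul_tmul, mul_assoc]
  compat u v := by
    induction u with
    | zero => simp
    | add u₁ u₂ h₁ h₂ => simp [add_mul, h₁, h₂]
    | tmul y b =>
      induction v with
      | zero => simp
      | add v₁ v₂ h₁ h₂ => simp only [map_add, mul_add, h₁, h₂]
      | tmul z c => simp [Algebra.TensorProduct.tmul_mul_tmul, mul_assoc]

/-- The multiplier `m ⊗ a` of `R ⊗ A`, for `m ∈ M(R)`, `a ∈ A`. -/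
def mtensor (m : Multiplier k R) (a : A) : Multiplier k (R ⊗[k] A) where
  U := map m.U (LinearMap.mulLeft k a)
  V := map m.V (LinearMap.mulRight k a)
  U_mul u v := by
    induction u with
    | zero => simp
    | add u₁ u₂ h₁ h₂ => simp [add_mul, h₁, h₂]
    | tmul y b =>
      induction v with
      | zero => simp
      | add v₁ v₂ h₁ h₂ => simp [mul_add, h₁, h₂]
      | tmul z c => simp [Algebra.TensorProduct.tmul_mul_tmul, mul_assoc, m.U_mul]
  V_mul u v := by
    induction u with
    | zero => simp
    | add u₁ u₂ h₁ h₂ => simp [add_mul, h₁, h₂]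
    | tmul y b =>
      induction v with
      | zero => simp
      | add v₁ v₂ h₁ h₂ => simp [mul_add, h₁, h₂]
      | tmul z c => simp [Algebra.TensorProduct.tmul_mul_tmul, mul_assoc, m.V_mul]
  compat u v := by
    induction u with
    | zero => simp
    | add u₁ u₂ h₁ h₂ => simp [add_mul, h₁, h₂]
    | tmul y b =>
      induction v with
      | zero => simp
      | add v₁ v₂ h₁ h₂ => simp only [map_add, mul_add, h₁, h₂]
      | tmul z c => simp [Algebra.TensorProduct.tmul_mul_tmul, mul_assoc, m.compat]

/-- The multiplier `m ⊗ 1` of `R ⊗ A`, for `m ∈ M(R)`. -/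
def mtensorOne (m : Multiplier k R) : Multiplier k (R ⊗[k] A) where
  U := map m.U LinearMap.id
  V := map m.V LinearMap.id
  U_mul u v := by
    induction u with
    | zero => simp
    | add u₁ u₂ h₁ h₂ => simp [add_mul, h₁, h₂]
    | tmul y b =>
      induction v with
      | zero => simp
      | add v₁ v₂ h₁ h₂ => simp [mul_add, h₁, h₂]
      | tmul z c => simp [Algebra.TensorProduct.tmul_mul_tmul, m.U_mul]
  V_mul u v := by
    induction u with
    | zero => simp
    | add u₁ u₂ h₁ h₂ => simp [add_mul, h₁, h₂]
    | tmul y b =>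
      induction v with
      | zero => simp
      | add v₁ v₂ h₁ h₂ => simp [mul_add, h₁, h₂]
      | tmul z c => simp [Algebra.TensorProduct.tmul_mul_tmul, m.V_mul]
  compat u v := by
    induction u with
    | zero => simp
    | add u₁ u₂ h₁ h₂ => simp [add_mul, h₁, h₂]
    | tmul y b =>
      induction v with
      | zero => simp
      | add v₁ v₂ h₁ h₂ => simp only [map_add, mul_add, h₁, h₂]
      | tmul z c => simp [Algebra.TensorProduct.tmul_mul_tmul, m.compat]

/-- Apply a functional to the second tensor factor:  `x ⊗ a ↦ f a • x`. -/
def apT (f : A →ₗ[k] k) : R ⊗[k] A →ₗ[k] R :=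
  (TensorProduct.rid k R).toLinearMap ∘ₗ lTensor R f

@[simp] lemma apT_tmul (f : A →ₗ[k] k) (x : R) (a : A) :
    apT k R A f (x ⊗ₜ a) = f a • x := rfl

/-- Sum of pure tensors attached to a list of pairs. -/
def psum {M N : Type*} [AddCommGroup M] [Module k M] [AddCommGroup N] [Module k N]
    (l : List (M × N)) : M ⊗[k] N :=
  (l.map fun p => p.1 ⊗ₜ[k] p.2).sum

end Tensor
section MHAdef

variable (A : Type*) [NonUnitalRing A] [Module k A] [SMulCommClass k A A] [IsScalarTower k A A]

/-- Apply a functional to the first tensor factor: `a ⊗ b ↦ f a • b`. -/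
def apF (f : A →ₗ[k] k) : A ⊗[k] A →ₗ[k] A :=
  (TensorProduct.lid k A).toLinearMap ∘ₗ rTensor A f

@[simp] lemma apF_tmul (f : A →ₗ[k] k) (a b : A) : apF k A f (a ⊗ₜ b) = f a • b := rfl

/-- A *regular multiplier Hopf algebra* structure on a nondegenerate algebra `A`:
a comultiplication `Δ : A → M(A ⊗ A)` such that the four Galois-type maps
`T1 : a ⊗ b ↦ Δ(a)(1 ⊗ b)`, `T2 : a ⊗ b ↦ (a ⊗ 1)Δ(b)`, `T3 : a ⊗ b ↦ Δ(a)(b ⊗ 1)`,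
`T4 : a ⊗ b ↦ (1 ⊗ b)Δ(a)` are (well-defined and) bijective from `A ⊗ A` onto `A ⊗ A`,
together with its counit `ε` and (bijective) antipode `S`, subject to the usual axioms
(coassociativity and the counit and antipode laws, in their `T1`/`T2`-covered form). -/
structure MHA where
  nondeg : NondegProd A
  comul : A →ₗ[k] Multiplier k (A ⊗[k] A)
  comul_mul : ∀ a b : A, comul (a * b) = comul a * comul b
  T1 : A ⊗[k] A ≃ₗ[k] A ⊗[k] A
  T2 : A ⊗[k] A ≃ₗ[k] A ⊗[k] A
  T3 : A ⊗[k] A ≃ₗ[k] A ⊗[k] A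
  T4 : A ⊗[k] A ≃ₗ[k] A ⊗[k] A
  hT1 : ∀ a b : A, comul a * oneT k A A b = Multiplier.incl (T1 (a ⊗ₜ b))
  hT2 : ∀ a b : A, tOne k A A a * comul b = Multiplier.incl (T2 (a ⊗ₜ b))
  hT3 : ∀ a b : A, comul a * tOne k A A b = Multiplier.incl (T3 (a ⊗ₜ b))
  hT4 : ∀ a b : A, oneT k A A b * comul a = Multiplier.incl (T4 (a ⊗ₜ b))
  coassoc : ∀ a b c : A,
    (TensorProduct.assoc k A A A)
        ((rTensor A (T2.toLinearMap ∘ₗ TensorProduct.mk k A A a)) (T1 (b ⊗ₜ c)))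
      = (lTensor A (T1.toLinearMap ∘ₗ (TensorProduct.mk k A A).flip c)) (T2 (a ⊗ₜ b))
  counit : A →ₗ[k] k
  counit_mul : ∀ a b : A, counit (a * b) = counit a * counit b
  hcounit1 : ∀ a b : A, apF k A counit (T1 (a ⊗ₜ b)) = a * b
  hcounit2 : ∀ a b : A, apT k A A counit (T2 (a ⊗ₜ b)) = a * b
  S : A ≃ₗ[k] A
  S_antimul : ∀ a b : A, S (a * b) = S b * S a
  hS1 : ∀ a b : A, LinearMap.mul' k A ((rTensor A S.toLinearMap) (T1 (a ⊗ₜ b))) = counit a • b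
  hS2 : ∀ a b : A, LinearMap.mul' k A ((lTensor A S.toLinearMap) (T2 (a ⊗ₜ b))) = counit b • a

end MHAdef

section PComod

variable {k}
variable {A : Type*} [NonUnitalRing A] [Module k A] [SMulCommClass k A A] [IsScalarTower k A A]
variable (H : MHA k A)
variable (R : Type*) [NonUnitalRing R] [Module k R] [SMulCommClass k R R] [IsScalarTower k R R]

/-- `(R, ρ, E)` is a *partial `A`-comodule algebra* (Definition 3.5).  The data
`rmap`/`lmap` records the elements `ρ(x)(1 ⊗ a)` and `(1 ⊗ a)ρ(x)` of `R ⊗ A`.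
Condition `c3` is the coassociativity
`(ρ ⊗ ι)(ρ(x)) = (E ⊗ 1)(ι ⊗ Δ)(ρ(x))` in its fully covered form
`x⁽⁰⁾⁽⁰⁾ ⊗ x⁽⁰⁾⁽¹⁾a ⊗ x⁽¹⁾b = Σᵢ E(x⁽⁰⁾ ⊗ (x⁽¹⁾aᵢ)₍₁₎) ⊗ (x⁽¹⁾aᵢ)₍₂₎bᵢ`
for any representation `Σᵢ aᵢ ⊗ bᵢ = T1⁻¹(a ⊗ b)`. -/
structure IsPComod (ρ : R →ₗ[k] Multiplier k (R ⊗[k] A)) (E : Multiplier k (R ⊗[k] A))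
    (rmap : R →ₗ[k] A →ₗ[k] R ⊗[k] A) (lmap : A →ₗ[k] R →ₗ[k] R ⊗[k] A) : Prop where
  ρ_mul : ∀ x y : R, ρ (x * y) = ρ x * ρ y
  ρ_inj : Function.Injective ρ
  E_idem : E * E = E
  hrmap : ∀ (x : R) (a : A), ρ x * oneT k R A a = Multiplier.incl (rmap x a)
  hlmap : ∀ (a : A) (x : R), oneT k R A a * ρ x = Multiplier.incl (lmap a x)
  c1l : ∀ a : A, ∃ l : List (Multiplier k R × A),
      oneT k R A a * E = (l.map fun p => mtensor k R A p.1 p.2).sum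
  c1r : ∀ a : A, ∃ l : List (Multiplier k R × A),
      E * oneT k R A a = (l.map fun p => mtensor k R A p.1 p.2).sum
  c2l : ∀ (x : R) (a : A), ∃ u : R ⊗[k] A, rmap x a = E.U u
  c2r : ∀ (a : A) (x : R), ∃ u : R ⊗[k] A, lmap a x = E.V u
  c3 : ∀ (x : R) (a b : A) (l : List (A × A)), psum k l = H.T1.symm (a ⊗ₜ b) →
      rTensor A (rmap.flip a) (rmap x b)
        = (l.map fun p => (rTensor A E.U) ((TensorProduct.assoc k R A A).symm
            ((lTensor R (H.T1.toLinearMap ∘ₗ (TensorProduct.mk k A A).flip p.2))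
              (rmap x p.1)))).sum

/-- A *symmetric* partial `A`-comodule algebra (Definition 3.5 (iv)):  additionally
`(ρ ⊗ ι)(ρ(x)) = (ι ⊗ Δ)(ρ(x))(E ⊗ 1)`, in the fully covered form
`x⁽⁰⁾⁽⁰⁾ ⊗ ax⁽⁰⁾⁽¹⁾ ⊗ bx⁽¹⁾ = Σᵢ (x⁽⁰⁾ ⊗ (aᵢx⁽¹⁾)₍₁₎)E ⊗ bᵢ(aᵢx⁽¹⁾)₍₂₎` for any
representation `Σᵢ aᵢ ⊗ bᵢ = T4⁻¹(a ⊗ b)`. -/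
structure IsSymPComod (ρ : R →ₗ[k] Multiplier k (R ⊗[k] A)) (E : Multiplier k (R ⊗[k] A))
    (rmap : R →ₗ[k] A →ₗ[k] R ⊗[k] A) (lmap : A →ₗ[k] R →ₗ[k] R ⊗[k] A)
    extends IsPComod H R ρ E rmap lmap : Prop where
  c4 : ∀ (x : R) (a b : A) (l : List (A × A)), psum k l = H.T4.symm (a ⊗ₜ b) →
      rTensor A (lmap a) (lmap b x)
        = (l.map fun p => (rTensor A E.V) ((TensorProduct.assoc k R A A).symm
            ((lTensor R (H.T4.toLinearMap ∘ₗ (TensorProduct.mk k A A).flip p.2))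
              (lmap p.1 x)))).sum

/-- `R` is a (global) right `A`-comodule algebra via `ρ` (Definition 3.1), with
`rmap`/`lmap` recording `ρ(x)(1 ⊗ a) ∈ R ⊗ A` and `(1 ⊗ a)ρ(x) ∈ R ⊗ A`;
coassociativity `(ρ ⊗ ι)ρ = (ι ⊗ Δ)ρ` is stated in its fully covered form. -/
structure IsComod (ρ : R →ₗ[k] Multiplier k (R ⊗[k] A))
    (rmap : R →ₗ[k] A →ₗ[k] R ⊗[k] A) (lmap : A →ₗ[k] R →ₗ[k] R ⊗[k] A) : Prop where
  ρ_mul : ∀ x y : R, ρ (x * y) = ρ x * ρ y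
  ρ_inj : Function.Injective ρ
  hrmap : ∀ (x : R) (a : A), ρ x * oneT k R A a = Multiplier.incl (rmap x a)
  hlmap : ∀ (a : A) (x : R), oneT k R A a * ρ x = Multiplier.incl (lmap a x)
  coassoc : ∀ (x : R) (a b : A) (l : List (A × A)), psum k l = H.T1.symm (a ⊗ₜ b) →
      rTensor A (rmap.flip a) (rmap x b)
        = (l.map fun p => (TensorProduct.assoc k R A A).symm
            ((lTensor R (H.T1.toLinearMap ∘ₗ (TensorProduct.mk k A A).flip p.2))
              (rmap x p.1))).sum

end PComod
section PMod

variable {k}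
variable {A : Type*} [NonUnitalRing A] [Module k A] [SMulCommClass k A A] [IsScalarTower k A A]
variable (H : MHA k A)
variable (R : Type*) [NonUnitalRing R] [Module k R] [SMulCommClass k R R] [IsScalarTower k R R]

/-- `(R, ⬝, 𝔢)` is a *partial `A`-module algebra* (Definition 4.5).  Sweedler
expressions are stated for arbitrary list representations of the corresponding
covered elements; e.g. condition (i) reads
`a ⬝ (x (b ⬝ y)) = Σᵢ (pᵢ ⬝ x)(qᵢ ⬝ y)` whenever `Σᵢ pᵢ ⊗ qᵢ = Δ(a)(1 ⊗ b) = T1(a ⊗ b)`,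
and in (ii) one uses the covering `a₍₁₎ ⊗ S(a₍₂₎)b = (ι ⊗ S)((1 ⊗ S⁻¹(b))Δ(a))`. -/
structure IsPModAlg (act : A →ₗ[k] R →ₗ[k] R) (e : A →ₗ[k] Multiplier k R) : Prop where
  cond1 : ∀ (a b : A) (x y : R) (l : List (A × A)), psum k l = H.T1 (a ⊗ₜ b) →
      act a (x * act b y) = (l.map fun p => act p.1 x * act p.2 y).sum
  cond2a : ∀ (a b : A) (x : R) (l : List (A × A)), psum k l = H.T4 (a ⊗ₜ H.S.symm b) →
      (e a).U (act b x) = (l.map fun p => act p.1 (act (H.S p.2) x)).sum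
  cond2b : ∀ (a : A) (x : R),
      (e a).U x ∈ Submodule.span k {z : R | ∃ (b : A) (y : R), z = act b y}
  cond3 : ∀ (la : List A) (lx : List R), ∃ b : A,
      (∀ a ∈ la, a * b = a ∧ b * a = a) ∧ ∀ a ∈ la, ∀ x ∈ lx, act a x = act a (act b x)
  cond4 : ∀ x : R, (∀ a : A, act a x = 0) → x = 0

/-- A *symmetric* partial `A`-module algebra (Definition 4.5 (v)-(vii)).  In (vi),
one uses the covering `a₍₂₎ ⊗ S⁻¹(a₍₁₎)b = σ((S⁻¹ ⊗ ι)((S(b) ⊗ 1)Δ(a)))`. -/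
structure IsSymPModAlg (act : A →ₗ[k] R →ₗ[k] R) (e : A →ₗ[k] Multiplier k R)
    extends IsPModAlg H R act e : Prop where
  cond5 : ∀ (a b : A) (x y : R) (l : List (A × A)), psum k l = H.T3 (a ⊗ₜ b) →
      act a (act b x * y) = (l.map fun p => act p.1 x * act p.2 y).sum
  cond6 : ∀ (a b : A) (x : R) (l : List (A × A)), psum k l = H.T2 (H.S b ⊗ₜ a) →
      (e a).V (act b x) = (l.map fun p => act p.2 (act (H.S.symm p.1) x)).sum
  cond7 : ∀ (a : A) (x : R),
      (e a).V x ∈ Submodule.span k {z : R | ∃ (b : A) (y : R), z = act b y}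

/-- `R` is a (global, unitary) left `A`-module algebra (Definition 4.1). -/
structure IsModAlg (act : A →ₗ[k] R →ₗ[k] R) : Prop where
  assoc : ∀ (a b : A) (x : R), act a (act b x) = act (a * b) x
  unital : Submodule.span k {z : R | ∃ (a : A) (x : R), z = act a x} = ⊤
  mul_cond : ∀ (a b : A) (x y : R) (l : List (A × A)), psum k l = H.T1 (a ⊗ₜ b) →
      act a (x * act b y) = (l.map fun p => act p.1 x * act p.2 y).sum

end PMod

section Dual

variable {k}
variable {A : Type*} [NonUnitalRing A] [Module k A] [SMulCommClass k A A] [IsScalarTower k A A]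
variable (H : MHA k A)
variable (Ahat : Type*) [NonUnitalRing Ahat] [Module k Ahat] [SMulCommClass k Ahat Ahat]
  [IsScalarTower k Ahat Ahat] (Hh : MHA k Ahat)

/-- A realization of the *dual* `Â = {φ(– a) : a ∈ A}` of a regular multiplier Hopf
algebra `A` with left integral `φ` (as in (2.1)): a regular multiplier Hopf algebra
`Â` together with the linear bijections `hat : a ↦ φ(– a)` and `hat' : b ↦ φ(b –)`,
the evaluation pairing `ev`, the product rule `(ŵ û)(c) = (w ⊗ u)(Δ c)`, the
coproduct rules (2.5) and (2.6) read through `hat`, and the modular element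
`δ ∈ M(A)` of (5.1), `(φ ⊗ ι)Δ(a) = φ(a)δ`. -/
structure DualPair where
  φ : A →ₗ[k] k
  φ_ne : φ ≠ 0
  /-- `(ι ⊗ φ)((b ⊗ 1)Δ(a)) = φ(a) b` : left invariance of the integral. -/
  φ_int : ∀ a b : A, apT k A A φ (H.T2 (b ⊗ₜ a)) = φ a • b
  /-- `(ι ⊗ φ)(Δ(a)(b ⊗ 1)) = φ(a) b` : left invariance of the integral. -/
  φ_int' : ∀ a b : A, apT k A A φ (H.T3 (a ⊗ₜ b)) = φ a • b
  hat : A ≃ₗ[k] Ahat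
  hat' : A ≃ₗ[k] Ahat
  ev : Ahat →ₗ[k] A →ₗ[k] k
  ev_hat : ∀ a x : A, ev (hat a) x = φ (x * a)
  ev_hat' : ∀ b x : A, ev (hat' b) x = φ (b * x)
  /-- the product of `Â`: `(φ(– a) u)(c) = Σ φ(c₍₁₎ a) u(c₍₂₎)`. -/
  ev_mul : ∀ (a : A) (u : Ahat) (c : A),
      ev (hat a * u) c
        = (TensorProduct.lid k k) ((map φ (ev u)) (H.T3 (c ⊗ₜ a)))
  /-- identity (2.5): `Δ̂(φ(– a))(1 ⊗ φ(– b)) = φ(– S⁻¹(b₍₁₎)a) ⊗ φ(– b₍₂₎)`,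
  read through `hat⁻¹ ⊗ hat⁻¹` and covered on the right leg by `c`. -/
  hatT1 : ∀ a b c : A,
      (lTensor A (LinearMap.mulRight k c))
          ((map hat.symm.toLinearMap hat.symm.toLinearMap) (Hh.T1 (hat a ⊗ₜ hat b)))
        = rTensor A (LinearMap.mulRight k a ∘ₗ H.S.symm.toLinearMap) (H.T1 (b ⊗ₜ c))
  /-- identity (2.6): `(ι ⊗ Ŝ)((1 ⊗ Ŝ⁻¹(φ(– b)))Δ̂(φ(– a))) = φ(– b₍₁₎a) ⊗ φ(– b₍₂₎)`,
  read through `hat⁻¹ ⊗ hat⁻¹` and covered on the right leg by `c`. -/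
  hatT2 : ∀ a b c : A,
      (lTensor A (LinearMap.mulRight k c))
          ((map hat.symm.toLinearMap hat.symm.toLinearMap)
            ((lTensor Ahat Hh.S.toLinearMap) (Hh.T4 (hat a ⊗ₜ Hh.S.symm (hat b)))))
        = rTensor A (LinearMap.mulRight k a) (H.T1 (b ⊗ₜ c))
  /-- the modular element `δ`, with `(φ ⊗ ι)(Δ(a)(1 ⊗ b)) = φ(a) • (δ b)`. -/
  delta : Multiplier k A
  deltaInv : Multiplier k A
  delta_inv : delta * deltaInv = 1 ∧ deltaInv * delta = 1
  hdelta : ∀ a b : A, apF k A φ (H.T1 (a ⊗ₜ b)) = φ a • delta.U b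

end Dual
section Statements
variable {k}
variable {A : Type*} [NonUnitalRing A] [Module k A] [SMulCommClass k A A] [IsScalarTower k A A]
variable {R : Type*} [NonUnitalRing R] [Module k R] [SMulCommClass k R R] [IsScalarTower k R R]

/-- The subspace `A·R` of `R` (the linear span of the elements `a · x`). -/
def ARspan (act : A →ₗ[k] R →ₗ[k] R) : Submodule k R :=
  Submodule.span k {z : R | ∃ (a : A) (x : R), z = act a x}

/-!
The maps `b ⊗ x ↦ Σ p·m(q·x)` over `T1⁻¹(a ⊗ b) = a₍₁₎ ⊗ S(a₍₂₎)b` and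
`c ⊗ y ↦ Σ p·((q·y)m)` over `T3⁻¹(c ⊗ a) = a₍₂₎ ⊗ S⁻¹(a₍₁₎)c` are defined on `A ⊗ R`.
Conditions (i) and (v), together with coassociativity, show that they are balanced:
`((c·y)(a·m))(b·x) = (c·y)((a·m)(b·x))`. Nondegeneracy of `A·R` then makes both vanish on
the kernel of `A ⊗ R → A·R`, so they descend to `A·R`, and the same balance, read through
nondegeneracy once more, gives the multiplier identities.
-/

section Tensors

variable {M N P : Type*} [AddCommGroup M] [Module k M] [AddCommGroup N] [Module k N]
  [AddCommGroup P] [Module k P]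

lemma map_psum (f : M ⊗[k] N →ₗ[k] P) (l : List (M × N)) :
    f (psum k l) = (l.map fun p => f (p.1 ⊗ₜ p.2)).sum := by
  simp [psum, map_list_sum, List.map_map, Function.comp_def]

lemma exists_psum_eq (t : M ⊗[k] N) : ∃ l : List (M × N), psum k l = t := by
  induction t with
  | zero => exact ⟨[], rfl⟩
  | tmul m n => exact ⟨[(m, n)], by simp [psum]⟩
  | add u v hu hv =>
    obtain ⟨l₁, rfl⟩ := hu
    obtain ⟨l₂, rfl⟩ := hv
    exact ⟨l₁ ++ l₂, by simp [psum]⟩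

lemma eq_zero_of_forall_dual_rTensor (w : M ⊗[k] N)
    (h : ∀ f : Module.Dual k M, TensorProduct.lid k N (rTensor N f w) = 0) : w = 0 := by
  classical
  let b := Module.Basis.ofVectorSpace k M
  suffices finsuppScalarLeft k N _ (LinearEquiv.rTensor N b.repr w) = 0 by
    simpa using this
  ext i
  rw [finsuppScalarLeft_apply]
  change TensorProduct.lid k N (rTensor N _ (rTensor N b.repr.toLinearMap w)) = 0
  rw [← LinearMap.comp_apply (rTensor N _), ← LinearMap.rTensor_comp]
  exact h (b.coord i)

lemma ext_of_forall_lTensor {ι : Type*} (ψ : ι → N →ₗ[k] P)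
    (hψ : ∀ n, (∀ i, ψ i n = 0) → n = 0) {w w' : M ⊗[k] N}
    (h : ∀ i, lTensor M (ψ i) w = lTensor M (ψ i) w') : w = w' := by
  rw [← sub_eq_zero]
  refine eq_zero_of_forall_dual_rTensor _ fun f => hψ _ fun i => ?_
  have hcomm : ψ i ∘ₗ (TensorProduct.lid k N).toLinearMap ∘ₗ rTensor N f
      = (TensorProduct.lid k P).toLinearMap ∘ₗ rTensor P f ∘ₗ lTensor M (ψ i) :=
    TensorProduct.ext' fun _ _ => by simp
  calc ψ i (TensorProduct.lid k N (rTensor N f (w - w')))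
      = TensorProduct.lid k P (rTensor P f (lTensor M (ψ i) (w - w'))) :=
        LinearMap.congr_fun hcomm _
    _ = 0 := by rw [map_sub, h i, sub_self, map_zero, map_zero]

lemma ext_of_forall_rTensor {ι : Type*} (ψ : ι → N →ₗ[k] P)
    (hψ : ∀ n, (∀ i, ψ i n = 0) → n = 0) {w w' : N ⊗[k] M}
    (h : ∀ i, rTensor M (ψ i) w = rTensor M (ψ i) w') : w = w' := by
  apply (TensorProduct.comm k N M).injective
  refine ext_of_forall_lTensor ψ hψ fun i => ?_
  rw [LinearMap.lTensor_comm, LinearMap.lTensor_comm, h i]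

end Tensors

namespace NondegProd

variable {M : Type*} [AddCommGroup M] [Module k M]

lemma lTensor_mulRight_ext (hA : NondegProd A) {w w' : M ⊗[k] A}
    (h : ∀ c : A, lTensor M (mulRight k c) w = lTensor M (mulRight k c) w') : w = w' :=
  ext_of_forall_lTensor (N := A) (P := A) (fun c => mulRight k c) (fun a ha => hA.1 a ha) h

lemma rTensor_mulLeft_ext (hA : NondegProd A) {w w' : A ⊗[k] M}
    (h : ∀ d : A, rTensor M (mulLeft k d) w = rTensor M (mulLeft k d) w') : w = w' :=
  ext_of_forall_rTensor (N := A) (P := A) (fun d => mulLeft k d) (fun a ha => hA.2 a ha) h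

lemma rTensor_mulRight_ext (hA : NondegProd A) {w w' : A ⊗[k] M}
    (h : ∀ c : A, rTensor M (mulRight k c) w = rTensor M (mulRight k c) w') : w = w' :=
  ext_of_forall_rTensor (N := A) (P := A) (fun c => mulRight k c) (fun a ha => hA.1 a ha) h

lemma incl_injective (hA : NondegProd A) :
    Function.Injective (Multiplier.incl (k := k) (A := A ⊗[k] A)) := by
  intro u v huv
  have mul_tmul (w : A ⊗[k] A) (x y : A) :
      w * (x ⊗ₜ y) = lTensor A (mulRight k y) (rTensor A (mulRight k x) w) := by
    induction w with
    | zero => simp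
    | tmul a b => simp [Algebra.TensorProduct.tmul_mul_tmul]
    | add w₁ w₂ h₁ h₂ => simp [add_mul, h₁, h₂]
  refine hA.rTensor_mulRight_ext fun x => hA.lTensor_mulRight_ext fun y => ?_
  rw [← mul_tmul, ← mul_tmul]
  exact congr(Multiplier.U $huv (x ⊗ₜ y))

end NondegProd

namespace Multiplier

variable {B : Type*} [NonUnitalRing B] [Module k B] [SMulCommClass k B B] [IsScalarTower k B B]

lemma incl_mul (u : B) (n : Multiplier k B) : incl (k := k) u * n = incl (n.V u) := by
  ext w
  · exact (n.compat u w).symm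
  · exact n.V_mul w u

lemma mul_incl (u : B) (n : Multiplier k B) : n * incl (k := k) u = incl (n.U u) := by
  ext w
  · exact n.U_mul u w
  · exact n.compat w u

lemma tOne_mul_oneT (x : R) (c : A) :
    tOne k R A x * oneT k R A c = oneT k R A c * tOne k R A x := by
  refine Multiplier.ext (TensorProduct.ext' fun y b => ?_) (TensorProduct.ext' fun y b => ?_) <;>
    simp [tOne, oneT]

end Multiplier

section Descent

variable {S : Submodule k R}

lemma mul_U_of_compat (hS_right : ∀ v ∈ S, (∀ u ∈ S, u * v = 0) → v = 0)
    (hS_mul : ∀ u ∈ S, ∀ v ∈ S, u * v ∈ S) {U V : S →ₗ[k] S}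
    (hUV : ∀ u v : S, (V u : R) * v = u * U v) (u v w : S) (huv : (u : R) * v = w) :
    (U w : R) = U u * v := by
  rw [← sub_eq_zero]
  refine hS_right _ (S.sub_mem (U w).2 (hS_mul _ (U u).2 _ v.2)) fun q hq => ?_
  calc q * ((U w : R) - U u * v) = (V ⟨q, hq⟩ : R) * w - (V ⟨q, hq⟩ : R) * u * v := by
        rw [mul_sub, hUV, hUV, mul_assoc]
    _ = 0 := by rw [← huv, mul_assoc, sub_self]

lemma V_mul_of_compat (hS_left : ∀ u ∈ S, (∀ v ∈ S, u * v = 0) → u = 0)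
    (hS_mul : ∀ u ∈ S, ∀ v ∈ S, u * v ∈ S) {U V : S →ₗ[k] S}
    (hUV : ∀ u v : S, (V u : R) * v = u * U v) (u v w : S) (huv : (u : R) * v = w) :
    (V w : R) = u * V v := by
  rw [← sub_eq_zero]
  refine hS_left _ (S.sub_mem (V w).2 (hS_mul _ u.2 _ (V v).2)) fun q hq => ?_
  calc ((V w : R) - u * V v) * (⟨q, hq⟩ : S) = (w : R) * U ⟨q, hq⟩ - u * (v * U ⟨q, hq⟩) := by
        rw [sub_mul, hUV, mul_assoc, hUV]
    _ = 0 := by rw [← huv, mul_assoc, sub_self]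

variable {X : Type*} [AddCommGroup X] [Module k X] {μ : X →ₗ[k] S}

lemma exists_comp_eq_of_balanced_right (hμ : Function.Surjective μ)
    (hS_right : ∀ v ∈ S, (∀ u ∈ S, u * v = 0) → v = 0) (F G : X →ₗ[k] S)
    (hbal : ∀ s t, (G s : R) * μ t = μ s * F t) : ∃ U : S →ₗ[k] S, U ∘ₗ μ = F := by
  obtain ⟨σ, hσ⟩ := μ.exists_rightInverse_of_surjective (LinearMap.range_eq_top.2 hμ)
  refine ⟨F ∘ₗ σ, LinearMap.ext fun t => ?_⟩
  have hker : μ (σ (μ t) - t) = 0 := by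
    rw [map_sub, ← LinearMap.comp_apply μ σ, hσ, LinearMap.id_apply, sub_self]
  have hF : (F (σ (μ t) - t) : R) = 0 := hS_right _ (F _).2 fun u hu => by
    obtain ⟨s, hs⟩ := hμ ⟨u, hu⟩
    change ((⟨u, hu⟩ : S) : R) * _ = 0
    rw [← hs, ← hbal, hker, ZeroMemClass.coe_zero, mul_zero]
  rw [map_sub, Submodule.coe_sub, sub_eq_zero] at hF
  exact Subtype.ext hF

lemma exists_comp_eq_of_balanced_left (hμ : Function.Surjective μ)
    (hS_left : ∀ u ∈ S, (∀ v ∈ S, u * v = 0) → u = 0) (F G : X →ₗ[k] S)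
    (hbal : ∀ s t, (G s : R) * μ t = μ s * F t) : ∃ V : S →ₗ[k] S, V ∘ₗ μ = G := by
  obtain ⟨σ, hσ⟩ := μ.exists_rightInverse_of_surjective (LinearMap.range_eq_top.2 hμ)
  refine ⟨G ∘ₗ σ, LinearMap.ext fun s => ?_⟩
  have hker : μ (σ (μ s) - s) = 0 := by
    rw [map_sub, ← LinearMap.comp_apply μ σ, hσ, LinearMap.id_apply, sub_self]
  have hG : (G (σ (μ s) - s) : R) = 0 := hS_left _ (G _).2 fun v hv => by
    obtain ⟨t, ht⟩ := hμ ⟨v, hv⟩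
    change _ * ((⟨v, hv⟩ : S) : R) = 0
    rw [← ht, hbal, hker, ZeroMemClass.coe_zero, zero_mul]
  rw [map_sub, Submodule.coe_sub, sub_eq_zero] at hG
  exact Subtype.ext hG

theorem exists_multiplier_of_balanced (hμ : Function.Surjective μ)
    (hS : (∀ u ∈ S, (∀ v ∈ S, u * v = 0) → u = 0) ∧ ∀ v ∈ S, (∀ u ∈ S, u * v = 0) → v = 0)
    (hS_mul : ∀ u ∈ S, ∀ v ∈ S, u * v ∈ S) (F G : X →ₗ[k] S)
    (hbal : ∀ s t, (G s : R) * μ t = μ s * F t) :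
    ∃ U V : S →ₗ[k] S, U ∘ₗ μ = F ∧ V ∘ₗ μ = G
      ∧ (∀ u v w : S, (u : R) * v = w → (U w : R) = U u * v)
      ∧ (∀ u v w : S, (u : R) * v = w → (V w : R) = u * V v)
      ∧ ∀ u v : S, (V u : R) * v = u * U v := by
  obtain ⟨U, hU⟩ := exists_comp_eq_of_balanced_right hμ hS.2 F G hbal
  obtain ⟨V, hV⟩ := exists_comp_eq_of_balanced_left hμ hS.1 F G hbal
  have hUV (u v : S) : (V u : R) * v = u * U v := by
    obtain ⟨s, rfl⟩ := hμ u
    obtain ⟨t, rfl⟩ := hμ v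
    rw [← LinearMap.comp_apply V, ← LinearMap.comp_apply U, hU, hV, hbal]
  exact ⟨U, V, hU, hV, mul_U_of_compat hS.2 hS_mul hUV, V_mul_of_compat hS.1 hS_mul hUV, hUV⟩

end Descent

section TensorMaps

variable {M N P Q : Type*} [AddCommGroup M] [Module k M] [AddCommGroup N] [Module k N]
  [AddCommGroup P] [Module k P] [AddCommGroup Q] [Module k Q]

lemma rTensor_lTensor_comm (f : M →ₗ[k] P) (g : N →ₗ[k] Q) (w : M ⊗[k] N) :
    rTensor Q f (lTensor M g w) = lTensor P g (rTensor N f w) := by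
  rw [← LinearMap.comp_apply, rTensor_comp_lTensor, ← lTensor_comp_rTensor, LinearMap.comp_apply]

lemma assoc_lTensor (g : P →ₗ[k] Q) (w : (M ⊗[k] N) ⊗[k] P) :
    TensorProduct.assoc k M N Q (lTensor (M ⊗[k] N) g w)
      = lTensor M (lTensor N g) (TensorProduct.assoc k M N P w) := by
  simp [LinearMap.lTensor_tensor]

lemma lTensor_mul'_assoc_tmul (z : M ⊗[k] A) (r : A) :
    lTensor M (LinearMap.mul' k A) (TensorProduct.assoc k M A A (z ⊗ₜ r))
      = lTensor M (mulRight k r) z := by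
  induction z with
  | zero => simp
  | tmul s t => simp
  | add u v hu hv => simp only [TensorProduct.add_tmul, map_add, hu, hv]

lemma mul'_rTensor_mulLeft (a : A) (w : A ⊗[k] A) :
    LinearMap.mul' k A (rTensor A (mulLeft k a) w) = a * LinearMap.mul' k A w := by
  induction w with
  | zero => simp
  | tmul p q => simp [mul_assoc]
  | add u v hu hv => simp [mul_add, hu, hv]

lemma mul'_lTensor_mulRight (b : A) (w : A ⊗[k] A) :
    LinearMap.mul' k A (lTensor A (mulRight k b) w) = LinearMap.mul' k A w * b := by
  induction w with
  | zero => simp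
  | tmul p q => simp [mul_assoc]
  | add u v hu hv => simp [add_mul, hu, hv]

lemma lTensor_toSpanSingleton_comp (f : A →ₗ[k] k) (b : A) (w : A ⊗[k] A) :
    lTensor A (toSpanSingleton k A b ∘ₗ f) w = apT k A A f w ⊗ₜ b := by
  induction w with
  | zero => simp
  | tmul x u => simp [TensorProduct.smul_tmul']
  | add u v hu hv => simp [TensorProduct.add_tmul, hu, hv]

lemma rTensor_toSpanSingleton_comp (f : A →ₗ[k] k) (c : A) (w : A ⊗[k] A) :
    rTensor A (toSpanSingleton k A c ∘ₗ f) w = c ⊗ₜ apF k A f w := by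
  induction w with
  | zero => simp
  | tmul u v => simp [TensorProduct.smul_tmul]
  | add u v hu hv => simp [TensorProduct.tmul_add, hu, hv]

end TensorMaps

namespace MHA

variable (H : MHA k A)

lemma lTensor_mulRight_T4 (a e c : A) :
    lTensor A (mulRight k c) (H.T4 (a ⊗ₜ e)) = lTensor A (mulLeft k e) (H.T1 (a ⊗ₜ c)) := by
  apply H.nondeg.incl_injective
  change Multiplier.incl ((oneT k A A c).V _) = Multiplier.incl ((oneT k A A e).U _)
  rw [← Multiplier.incl_mul, ← Multiplier.mul_incl, ← H.hT4, ← H.hT1, mul_assoc]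

lemma lTensor_mulRight_T2 (d b c : A) :
    lTensor A (mulRight k c) (H.T2 (d ⊗ₜ b)) = rTensor A (mulLeft k d) (H.T1 (b ⊗ₜ c)) := by
  apply H.nondeg.incl_injective
  change Multiplier.incl ((oneT k A A c).V _) = Multiplier.incl ((tOne k A A d).U _)
  rw [← Multiplier.incl_mul, ← Multiplier.mul_incl, ← H.hT2, ← H.hT1, mul_assoc]

lemma rTensor_mulLeft_T4 (d u c : A) :
    rTensor A (mulLeft k d) (H.T4 (u ⊗ₜ c)) = lTensor A (mulLeft k c) (H.T2 (d ⊗ₜ u)) := by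
  apply H.nondeg.incl_injective
  change Multiplier.incl ((tOne k A A d).U _) = Multiplier.incl ((oneT k A A c).U _)
  rw [← Multiplier.mul_incl, ← Multiplier.mul_incl, ← H.hT4, ← H.hT2, ← mul_assoc, ← mul_assoc,
    Multiplier.tOne_mul_oneT]

lemma lTensor_mulRight_T3 (p r d : A) :
    lTensor A (mulRight k d) (H.T3 (p ⊗ₜ r)) = rTensor A (mulRight k r) (H.T1 (p ⊗ₜ d)) := by
  apply H.nondeg.incl_injective
  change Multiplier.incl ((oneT k A A d).V _) = Multiplier.incl ((tOne k A A r).V _)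
  rw [← Multiplier.incl_mul, ← Multiplier.incl_mul, ← H.hT3, ← H.hT1, mul_assoc, mul_assoc,
    Multiplier.tOne_mul_oneT]

/-- Coassociativity in the form `d a₍₁₎ ⊗ a₍₂₎ ⊗ e a₍₃₎`, obtained from `coassoc` by covering
the third leg with `c` and trading `T4` for `T1`. -/
lemma coassoc_T2_T4 (a d e : A) :
    TensorProduct.assoc k A A A
        (rTensor A (H.T2.toLinearMap ∘ₗ TensorProduct.mk k A A d) (H.T4 (a ⊗ₜ e)))
      = lTensor A (H.T4.toLinearMap ∘ₗ (TensorProduct.mk k A A).flip e) (H.T2 (d ⊗ₜ a)) := by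
  set f := H.T2.toLinearMap ∘ₗ TensorProduct.mk k A A d
  apply (TensorProduct.assoc k A A A).symm.injective
  refine H.nondeg.lTensor_mulRight_ext fun c => ?_
  apply (TensorProduct.assoc k A A A).injective
  have hT4T1 : lTensor A (mulRight k c) ∘ₗ H.T4.toLinearMap ∘ₗ (TensorProduct.mk k A A).flip e
      = lTensor A (mulLeft k e) ∘ₗ H.T1.toLinearMap ∘ₗ (TensorProduct.mk k A A).flip c :=
    LinearMap.ext fun s => H.lTensor_mulRight_T4 s e c
  calc TensorProduct.assoc k A A A (lTensor (A ⊗[k] A) (mulRight k c)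
          ((TensorProduct.assoc k A A A).symm
            (TensorProduct.assoc k A A A (rTensor A f (H.T4 (a ⊗ₜ e))))))
      = TensorProduct.assoc k A A A
          (lTensor (A ⊗[k] A) (mulLeft k e) (rTensor A f (H.T1 (a ⊗ₜ c)))) := by
        rw [LinearEquiv.symm_apply_apply, ← rTensor_lTensor_comm, H.lTensor_mulRight_T4,
          rTensor_lTensor_comm]
    _ = lTensor A (lTensor A (mulLeft k e) ∘ₗ H.T1.toLinearMap ∘ₗ (TensorProduct.mk k A A).flip c)
          (H.T2 (d ⊗ₜ a)) := by
        rw [assoc_lTensor, H.coassoc, ← LinearMap.comp_apply (lTensor A _), ← lTensor_comp]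
    _ = _ := by
        rw [← hT4T1, lTensor_comp, LinearMap.comp_apply, assoc_lTensor,
          LinearEquiv.apply_symm_apply]

/-- `q ↦ q₍₁₎ ⊗ S(q₍₂₎) b`. -/
def antipodeT4 (b : A) : A →ₗ[k] A ⊗[k] A :=
  lTensor A H.S.toLinearMap ∘ₗ H.T4.toLinearMap ∘ₗ (TensorProduct.mk k A A).flip (H.S.symm b)

/-- `q ↦ S⁻¹(q₍₁₎) c ⊗ q₍₂₎`. -/
def antipodeT2 (c : A) : A →ₗ[k] A ⊗[k] A :=
  rTensor A H.S.symm.toLinearMap ∘ₗ H.T2.toLinearMap ∘ₗ TensorProduct.mk k A A (H.S c)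

lemma mul'_antipodeT4 (b u : A) : LinearMap.mul' k A (H.antipodeT4 b u) = H.counit u • b := by
  rw [← sub_eq_zero]
  refine H.nondeg.2 _ fun a => ?_
  have hS : H.S.toLinearMap ∘ₗ mulLeft k (H.S.symm b) = mulRight k b ∘ₗ H.S.toLinearMap :=
    LinearMap.ext fun z => by simp [H.S_antimul]
  rw [mul_sub, sub_eq_zero, ← mul'_rTensor_mulLeft, antipodeT4, LinearMap.comp_apply,
    LinearMap.comp_apply, rTensor_lTensor_comm, LinearEquiv.coe_coe, LinearMap.flip_apply,
    TensorProduct.mk_apply, H.rTensor_mulLeft_T4,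
    ← LinearMap.comp_apply (lTensor A H.S.toLinearMap), ← lTensor_comp, hS, lTensor_comp,
    LinearMap.comp_apply, mul'_lTensor_mulRight, H.hS2, smul_mul_assoc, mul_smul_comm]

lemma mul'_comm_antipodeT2 (c u : A) :
    LinearMap.mul' k A (TensorProduct.comm k A A (H.antipodeT2 c u)) = H.counit u • c := by
  have hS : H.S.toLinearMap ∘ₗ LinearMap.mul' k A ∘ₗ (TensorProduct.comm k A A).toLinearMap
        ∘ₗ rTensor A H.S.symm.toLinearMap
      = LinearMap.mul' k A ∘ₗ lTensor A H.S.toLinearMap :=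
    TensorProduct.ext' fun p t => by simp [H.S_antimul]
  apply H.S.injective
  have := LinearMap.congr_fun hS (H.T2 (H.S c ⊗ₜ u))
  simp only [LinearMap.comp_apply, LinearEquiv.coe_coe] at this
  rw [antipodeT2, LinearMap.comp_apply, LinearMap.comp_apply, LinearEquiv.coe_coe,
    TensorProduct.mk_apply, this, H.hS2, map_smul]

lemma assoc_rTensor_antipodeT4 (d b q : A) :
    TensorProduct.assoc k A A A
        (rTensor A (H.T2.toLinearMap ∘ₗ TensorProduct.mk k A A d) (H.antipodeT4 b q))
      = lTensor A (H.antipodeT4 b) (H.T2 (d ⊗ₜ q)) := by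
  rw [antipodeT4, LinearMap.comp_apply, LinearMap.comp_apply, rTensor_lTensor_comm,
    assoc_lTensor, LinearEquiv.coe_coe, LinearMap.flip_apply, TensorProduct.mk_apply,
    H.coassoc_T2_T4, ← LinearMap.comp_apply (lTensor A _), ← lTensor_comp]

lemma T1_antipodeT4 (q b : A) : H.T1 (H.antipodeT4 b q) = q ⊗ₜ b := by
  refine H.nondeg.rTensor_mulLeft_ext fun d => ?_
  have hT1 : rTensor A (mulLeft k d) ∘ₗ H.T1.toLinearMap
      = lTensor A (LinearMap.mul' k A) ∘ₗ (TensorProduct.assoc k A A A).toLinearMap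
          ∘ₗ rTensor A (H.T2.toLinearMap ∘ₗ TensorProduct.mk k A A d) :=
    TensorProduct.ext' fun p r => by
      simp [lTensor_mul'_assoc_tmul, ← H.lTensor_mulRight_T2]
  have hε : LinearMap.mul' k A ∘ₗ H.antipodeT4 b = toSpanSingleton k A b ∘ₗ H.counit :=
    LinearMap.ext fun u => by simp [H.mul'_antipodeT4]
  calc rTensor A (mulLeft k d) (H.T1 (H.antipodeT4 b q))
      = lTensor A (LinearMap.mul' k A) (TensorProduct.assoc k A A A
          (rTensor A (H.T2.toLinearMap ∘ₗ TensorProduct.mk k A A d) (H.antipodeT4 b q))) :=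
        LinearMap.congr_fun hT1 _
    _ = lTensor A (LinearMap.mul' k A ∘ₗ H.antipodeT4 b) (H.T2 (d ⊗ₜ q)) := by
        rw [H.assoc_rTensor_antipodeT4, lTensor_comp, LinearMap.comp_apply]
    _ = rTensor A (mulLeft k d) (q ⊗ₜ b) := by
        rw [hε, lTensor_toSpanSingleton_comp, H.hcounit2]
        rfl

lemma T1_symm_tmul (q b : A) : H.T1.symm (q ⊗ₜ b) = H.antipodeT4 b q := by
  rw [← T1_antipodeT4, LinearEquiv.symm_apply_apply]


lemma T3_comm_antipodeT2 (q c : A) :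
    H.T3 (TensorProduct.comm k A A (H.antipodeT2 c q)) = c ⊗ₜ q := by
  refine H.nondeg.lTensor_mulRight_ext fun d => ?_
  -- `ψ (p ⊗ z) = z · (S⁻¹ p ⊗ 1)`
  let ψ : A ⊗[k] (A ⊗[k] A) →ₗ[k] A ⊗[k] A :=
    lift (rTensorHom A ∘ₗ (LinearMap.mul k A).flip ∘ₗ H.S.symm.toLinearMap)
  have hψ (z : A ⊗[k] A) (h : A) :
      ψ (TensorProduct.assoc k A A A (z ⊗ₜ h))
        = LinearMap.mul' k A (TensorProduct.comm k A A (rTensor A H.S.symm.toLinearMap z))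
            ⊗ₜ h := by
    induction z with
    | zero => simp
    | tmul u v => simp [ψ]
    | add u v hu hv => simp only [TensorProduct.add_tmul, map_add, hu, hv]
  have hT3 : lTensor A (mulRight k d) ∘ₗ H.T3.toLinearMap ∘ₗ (TensorProduct.comm k A A).toLinearMap
        ∘ₗ rTensor A H.S.symm.toLinearMap
      = ψ ∘ₗ lTensor A (H.T1.toLinearMap ∘ₗ (TensorProduct.mk k A A).flip d) :=
    TensorProduct.ext' fun p t => by simp [ψ, H.lTensor_mulRight_T3]; rfl
  have hε : ψ ∘ₗ (TensorProduct.assoc k A A A).toLinearMap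
        ∘ₗ rTensor A (H.T2.toLinearMap ∘ₗ TensorProduct.mk k A A (H.S c))
      = rTensor A (toSpanSingleton k A c ∘ₗ H.counit) :=
    TensorProduct.ext' fun g h => by
      have := H.mul'_comm_antipodeT2 c g
      simp only [antipodeT2, LinearMap.comp_apply, LinearEquiv.coe_coe, TensorProduct.mk_apply]
        at this
      simp [hψ, this]
  calc lTensor A (mulRight k d) (H.T3 (TensorProduct.comm k A A (H.antipodeT2 c q)))
      = ψ (lTensor A (H.T1.toLinearMap ∘ₗ (TensorProduct.mk k A A).flip d)
          (H.T2 (H.S c ⊗ₜ q))) := LinearMap.congr_fun hT3 _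
    _ = rTensor A (toSpanSingleton k A c ∘ₗ H.counit) (H.T1 (q ⊗ₜ d)) := by
        rw [← H.coassoc]
        exact LinearMap.congr_fun hε _
    _ = lTensor A (mulRight k d) (c ⊗ₜ q) := by
        rw [rTensor_toSpanSingleton_comp, H.hcounit1]
        rfl

lemma T3_symm_tmul (c q : A) :
    H.T3.symm (c ⊗ₜ q) = TensorProduct.comm k A A (H.antipodeT2 c q) := by
  rw [← T3_comm_antipodeT2, LinearEquiv.symm_apply_apply]

lemma assoc_rTensor_antipodeT2 (a b c : A) :
    TensorProduct.assoc k A A A (rTensor A (H.antipodeT2 c) (H.antipodeT4 b a))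
      = lTensor A (H.antipodeT4 b) (H.antipodeT2 c a) := by
  calc TensorProduct.assoc k A A A (rTensor A (H.antipodeT2 c) (H.antipodeT4 b a))
      = TensorProduct.assoc k A A A (TensorProduct.map (rTensor A H.S.symm.toLinearMap)
          H.S.toLinearMap (rTensor A (H.T2.toLinearMap ∘ₗ TensorProduct.mk k A A (H.S c))
            (H.T4 (a ⊗ₜ H.S.symm b)))) := by
        rw [map_rTensor, ← rTensor_comp_lTensor]
        rfl
    _ = TensorProduct.map H.S.symm.toLinearMap (lTensor A H.S.toLinearMap)
          (TensorProduct.assoc k A A A (rTensor A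
            (H.T2.toLinearMap ∘ₗ TensorProduct.mk k A A (H.S c)) (H.T4 (a ⊗ₜ H.S.symm b)))) :=
        (map_map_assoc _ _ _ _).symm
    _ = lTensor A (H.antipodeT4 b) (H.antipodeT2 c a) := by
        rw [H.coassoc_T2_T4, map_lTensor, ← lTensor_comp_rTensor]
        rfl

/-- Coassociativity through the inverse Galois maps: both sides are
`a₍₂₎ ⊗ S⁻¹(a₍₁₎) c ⊗ S(a₍₃₎) b`. -/
lemma rightComm_rTensor_T1_symm (a b c : A) :
    TensorProduct.rightComm k A A A
        (rTensor A (H.T1.symm.toLinearMap ∘ₗ (TensorProduct.mk k A A).flip b)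
          (H.T3.symm (c ⊗ₜ a)))
      = rTensor A (H.T3.symm.toLinearMap ∘ₗ TensorProduct.mk k A A c) (H.T1.symm (a ⊗ₜ b)) := by
  have h1 : H.T1.symm.toLinearMap ∘ₗ (TensorProduct.mk k A A).flip b = H.antipodeT4 b :=
    LinearMap.ext fun q => H.T1_symm_tmul q b
  have h3 : H.T3.symm.toLinearMap ∘ₗ TensorProduct.mk k A A c
      = (TensorProduct.comm k A A).toLinearMap ∘ₗ H.antipodeT2 c :=
    LinearMap.ext fun q => H.T3_symm_tmul c q
  have hperm : (TensorProduct.rightComm k A A A).toLinearMap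
        ∘ₗ (TensorProduct.comm k A (A ⊗[k] A)).toLinearMap
        ∘ₗ (TensorProduct.assoc k A A A).toLinearMap
      = rTensor A (TensorProduct.comm k A A).toLinearMap :=
    TensorProduct.ext_threefold fun _ _ _ => rfl
  rw [h1, h3, H.T3_symm_tmul, H.T1_symm_tmul, rTensor_comm, ← H.assoc_rTensor_antipodeT2,
    rTensor_comp, LinearMap.comp_apply, ← hperm]
  rfl

end MHA

section ModuleAlgebra

variable (act : A →ₗ[k] R →ₗ[k] R)

lemma range_lift_eq_ARspan : LinearMap.range (lift act) = ARspan act := by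
  rw [LinearMap.range_eq_map, ← TensorProduct.span_tmul_eq_top, Submodule.map_span, ARspan]
  congr 1
  ext z
  simp [eq_comm]

lemma lift_mem_ARspan (t : A ⊗[k] R) : lift act t ∈ ARspan act :=
  range_lift_eq_ARspan act ▸ LinearMap.mem_range_self _ t

def sandwich (f : R →ₗ[k] R) : A ⊗[k] A →ₗ[k] R →ₗ[k] R :=
  lift ((LinearMap.llcomp k R R R).compl₁₂ act (LinearMap.llcomp k R R R f ∘ₗ act))

@[simp] lemma sandwich_tmul (f : R →ₗ[k] R) (p q : A) (x : R) :
    sandwich act f (p ⊗ₜ q) x = act p (f (act q x)) := rfl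

lemma sandwich_mem_ARspan (f : R →ₗ[k] R) (w : A ⊗[k] A) (x : R) :
    sandwich act f w x ∈ ARspan act := by
  induction w with
  | zero => exact Submodule.zero_mem _
  | tmul p q => exact Submodule.subset_span ⟨p, _, rfl⟩
  | add u v hu hv => simpa only [map_add, LinearMap.add_apply] using Submodule.add_mem _ hu hv

end ModuleAlgebra

def pairMul {M : Type*} [AddCommGroup M] [Module k M] (f g : M →ₗ[k] R) : M ⊗[k] M →ₗ[k] R :=
  lift ((LinearMap.mul k R).compl₁₂ f g)

@[simp] lemma pairMul_tmul {M : Type*} [AddCommGroup M] [Module k M] (f g : M →ₗ[k] R)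
    (p q : M) : pairMul f g (p ⊗ₜ q) = f p * g q := rfl

namespace IsPModAlg

variable {H : MHA k A} {act : A →ₗ[k] R →ₗ[k] R} {e : A →ₗ[k] Multiplier k R}

lemma pairMul_comp_T1 (h : IsPModAlg H R act e) (x y : R) :
    pairMul (act.flip x) (act.flip y) ∘ₗ H.T1.toLinearMap
      = lift act ∘ₗ lTensor A (mulLeft k x ∘ₗ act.flip y) :=
  TensorProduct.ext' fun s t => by
    obtain ⟨l, hl⟩ := exists_psum_eq (H.T1 (s ⊗ₜ t))
    simp [← hl, map_psum, h.cond1 s t x y l hl]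

lemma mul_mem_ARspan (h : IsPModAlg H R act e) :
    ∀ u ∈ ARspan act, ∀ v ∈ ARspan act, u * v ∈ ARspan act := by
  intro u hu v hv
  rw [← range_lift_eq_ARspan] at hu hv ⊢
  obtain ⟨s, rfl⟩ := hu
  obtain ⟨t, rfl⟩ := hv
  induction s with
  | zero => simp
  | add s₁ s₂ h₁ h₂ => simpa only [map_add, add_mul] using Submodule.add_mem _ h₁ h₂
  | tmul b x =>
    induction t with
    | zero => simp
    | add t₁ t₂ h₁ h₂ => simpa only [map_add, mul_add] using Submodule.add_mem _ h₁ h₂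
    | tmul c y =>
      have hbc := LinearMap.congr_fun (h.pairMul_comp_T1 x y) (H.T1.symm (b ⊗ₜ c))
      simp only [LinearMap.comp_apply, LinearEquiv.coe_coe, LinearEquiv.apply_symm_apply,
        pairMul_tmul, LinearMap.flip_apply] at hbc
      rw [lift.tmul, lift.tmul, hbc]
      exact LinearMap.mem_range_self _ _

end IsPModAlg

lemma IsSymPModAlg.pairMul_comp_T3 {H : MHA k A} {act : A →ₗ[k] R →ₗ[k] R}
    {e : A →ₗ[k] Multiplier k R} (h : IsSymPModAlg H R act e) (x y : R) :
    pairMul (act.flip x) (act.flip y) ∘ₗ H.T3.toLinearMap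
      = lift act ∘ₗ lTensor A (mulRight k y ∘ₗ act.flip x) :=
  TensorProduct.ext' fun s t => by
    obtain ⟨l, hl⟩ := exists_psum_eq (H.T3 (s ⊗ₜ t))
    simp [← hl, map_psum, h.cond5 s t x y l hl]

section ActionOnMultipliers

variable (H : MHA k A) (act : A →ₗ[k] R →ₗ[k] R) (a : A) (m : Multiplier k R)

/-- `b ⊗ x ↦ (a·m)(b·x) = a₍₁₎·(m(S(a₍₂₎)b·x))`, the sum running over `T1⁻¹(a ⊗ b)`. -/
def actU : A ⊗[k] R →ₗ[k] R :=
  lift (sandwich act m.U ∘ₗ H.T1.symm.toLinearMap ∘ₗ TensorProduct.mk k A A a)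

/-- `c ⊗ y ↦ (c·y)(a·m) = a₍₂₎·((S⁻¹(a₍₁₎)c·y)m)`, the sum running over `T3⁻¹(c ⊗ a)`. -/
def actV : A ⊗[k] R →ₗ[k] R :=
  lift (sandwich act m.V ∘ₗ H.T3.symm.toLinearMap ∘ₗ (TensorProduct.mk k A A).flip a)

lemma actU_tmul (b : A) (x : R) :
    actU H act a m (b ⊗ₜ x) = sandwich act m.U (H.T1.symm (a ⊗ₜ b)) x := rfl

lemma actV_tmul (c : A) (y : R) :
    actV H act a m (c ⊗ₜ y) = sandwich act m.V (H.T3.symm (c ⊗ₜ a)) y := rfl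

lemma actU_mem_ARspan (t : A ⊗[k] R) : actU H act a m t ∈ ARspan act := by
  induction t with
  | zero => simp
  | tmul b x => exact sandwich_mem_ARspan act _ _ x
  | add u v hu hv => simpa only [map_add] using Submodule.add_mem _ hu hv

lemma actV_mem_ARspan (t : A ⊗[k] R) : actV H act a m t ∈ ARspan act := by
  induction t with
  | zero => simp
  | tmul c y => exact sandwich_mem_ARspan act _ _ y
  | add u v hu hv => simpa only [map_add] using Submodule.add_mem _ hu hv

lemma actU_tmul_eq_sum (b : A) (x : R) (l : List (A × A))
    (hl : psum k l = H.T4 (a ⊗ₜ H.S.symm b)) :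
    actU H act a m (b ⊗ₜ x) = (l.map fun p => act p.1 (m.U (act (H.S p.2) x))).sum := by
  have := map_psum (LinearMap.applyₗ x ∘ₗ sandwich act m.U ∘ₗ lTensor A H.S.toLinearMap) l
  simp only [LinearMap.comp_apply, LinearMap.applyₗ_apply_apply, lTensor_tmul,
    LinearEquiv.coe_coe, sandwich_tmul] at this
  rw [actU_tmul, H.T1_symm_tmul, MHA.antipodeT4, LinearMap.comp_apply, LinearMap.comp_apply,
    LinearMap.flip_apply, TensorProduct.mk_apply, LinearEquiv.coe_coe, ← hl, this]

lemma actV_tmul_eq_sum (c : A) (y : R) (l : List (A × A))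
    (hl : psum k l = H.T2 (H.S c ⊗ₜ a)) :
    actV H act a m (c ⊗ₜ y) = (l.map fun p => act p.2 (m.V (act (H.S.symm p.1) y))).sum := by
  have := map_psum (LinearMap.applyₗ y ∘ₗ sandwich act m.V
    ∘ₗ (TensorProduct.comm k A A).toLinearMap ∘ₗ rTensor A H.S.symm.toLinearMap) l
  simp only [LinearMap.comp_apply, LinearMap.applyₗ_apply_apply, rTensor_tmul,
    LinearEquiv.coe_coe, TensorProduct.comm_tmul, sandwich_tmul] at this
  rw [actV_tmul, H.T3_symm_tmul, MHA.antipodeT2, LinearMap.comp_apply, LinearMap.comp_apply,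
    TensorProduct.mk_apply, LinearEquiv.coe_coe, ← hl, this]

end ActionOnMultipliers

/-- `(s ⊗ q) ⊗ t ↦ s·((q·y) m(t·x))`, the common value of both sides of the balance. -/
def tripleAct (act : A →ₗ[k] R →ₗ[k] R) (m : Multiplier k R) (x y : R) :
    (A ⊗[k] A) ⊗[k] A →ₗ[k] R :=
  lift act ∘ₗ lTensor A (pairMul (act.flip y) (m.U ∘ₗ act.flip x))
    ∘ₗ (TensorProduct.assoc k A A A).toLinearMap

lemma IsPModAlg.sandwich_V_mul_act {H : MHA k A} {act : A →ₗ[k] R →ₗ[k] R}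
    {e : A →ₗ[k] Multiplier k R} (h : IsPModAlg H R act e) (m : Multiplier k R) (b : A)
    (x y : R) (w : A ⊗[k] A) :
    sandwich act m.V w y * act b x
      = tripleAct act m x y (TensorProduct.rightComm k A A A
          (rTensor A (H.T1.symm.toLinearMap ∘ₗ (TensorProduct.mk k A A).flip b) w)) := by
  have key : mulRight k (act b x) ∘ₗ LinearMap.applyₗ y ∘ₗ sandwich act m.V
      = tripleAct act m x y ∘ₗ (TensorProduct.rightComm k A A A).toLinearMap
          ∘ₗ rTensor A (H.T1.symm.toLinearMap ∘ₗ (TensorProduct.mk k A A).flip b) :=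
    TensorProduct.ext' fun p q => by
      have hT1 := LinearMap.congr_fun (h.pairMul_comp_T1 (m.V (act q y)) x)
        (H.T1.symm (p ⊗ₜ b))
      simp only [LinearMap.comp_apply, LinearEquiv.coe_coe, LinearEquiv.apply_symm_apply,
        pairMul_tmul, LinearMap.flip_apply] at hT1
      simp only [LinearMap.comp_apply, LinearMap.applyₗ_apply_apply, sandwich_tmul,
        mulRight_apply, hT1, rTensor_tmul, LinearEquiv.coe_coe, LinearMap.flip_apply,
        TensorProduct.mk_apply, tripleAct]
      congr 1
      induction H.T1.symm (p ⊗ₜ b) with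
      | zero => simp
      | tmul s t => simp [m.compat]
      | add u v hu hv => simp only [map_add, TensorProduct.add_tmul, hu, hv]
  exact LinearMap.congr_fun key w

lemma IsSymPModAlg.act_mul_sandwich_U {H : MHA k A} {act : A →ₗ[k] R →ₗ[k] R}
    {e : A →ₗ[k] Multiplier k R} (h : IsSymPModAlg H R act e) (m : Multiplier k R) (c : A)
    (x y : R) (w : A ⊗[k] A) :
    act c y * sandwich act m.U w x
      = tripleAct act m x y (rTensor A (H.T3.symm.toLinearMap ∘ₗ TensorProduct.mk k A A c) w) := by
  have key : mulLeft k (act c y) ∘ₗ LinearMap.applyₗ x ∘ₗ sandwich act m.U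
      = tripleAct act m x y ∘ₗ rTensor A (H.T3.symm.toLinearMap ∘ₗ TensorProduct.mk k A A c) :=
    TensorProduct.ext' fun p q => by
      have hT3 := LinearMap.congr_fun (h.pairMul_comp_T3 y (m.U (act q x)))
        (H.T3.symm (c ⊗ₜ p))
      simp only [LinearMap.comp_apply, LinearEquiv.coe_coe, LinearEquiv.apply_symm_apply,
        pairMul_tmul, LinearMap.flip_apply] at hT3
      simp only [LinearMap.comp_apply, LinearMap.applyₗ_apply_apply, sandwich_tmul,
        mulLeft_apply, hT3, rTensor_tmul, LinearEquiv.coe_coe, TensorProduct.mk_apply, tripleAct]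
      congr 1
      induction H.T3.symm (c ⊗ₜ p) with
      | zero => simp
      | tmul s t => simp
      | add u v hu hv => simp only [map_add, TensorProduct.add_tmul, hu, hv]
  exact LinearMap.congr_fun key w

namespace IsSymPModAlg

variable {H : MHA k A} {act : A →ₗ[k] R →ₗ[k] R} {e : A →ₗ[k] Multiplier k R}

lemma sandwich_T3_symm_mul_act (h : IsSymPModAlg H R act e) (m : Multiplier k R) (a b c : A)
    (x y : R) :
    sandwich act m.V (H.T3.symm (c ⊗ₜ a)) y * act b x
      = act c y * sandwich act m.U (H.T1.symm (a ⊗ₜ b)) x := by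
  rw [h.sandwich_V_mul_act, H.rightComm_rTensor_T1_symm, h.act_mul_sandwich_U]

lemma actV_mul_lift (h : IsSymPModAlg H R act e) (a : A) (m : Multiplier k R)
    (s t : A ⊗[k] R) :
    actV H act a m s * lift act t = lift act s * actU H act a m t := by
  induction s with
  | zero => simp
  | add s₁ s₂ h₁ h₂ => simp only [map_add, add_mul, h₁, h₂]
  | tmul c y =>
    induction t with
    | zero => simp
    | add t₁ t₂ h₁ h₂ => simp only [map_add, mul_add, h₁, h₂]
    | tmul b x => exact h.sandwich_T3_symm_mul_act m a b c x y

end IsSymPModAlg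

theorem extension_to_multiplier_of_AR_general
    (H : MHA k A)
    (act : A →ₗ[k] R →ₗ[k] R) (e : A →ₗ[k] Multiplier k R)
    (h : IsSymPModAlg H R act e)
    (hAR : (∀ u ∈ ARspan act, (∀ v ∈ ARspan act, u * v = 0) → u = 0)
         ∧ ∀ v ∈ ARspan act, (∀ u ∈ ARspan act, u * v = 0) → v = 0)
    (a : A) (m : Multiplier k R) :
    ∃ (U V : ↥(ARspan act) →ₗ[k] ↥(ARspan act)),
      (∀ (b : A) (x : R) (l : List (A × A)), psum k l = H.T4 (a ⊗ₜ H.S.symm b) →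
        ((U ⟨act b x, Submodule.subset_span ⟨b, x, rfl⟩⟩ : R)
          = (l.map fun p => act p.1 (m.U (act (H.S p.2) x))).sum))
      ∧ (∀ (b : A) (x : R) (l : List (A × A)), psum k l = H.T2 (H.S b ⊗ₜ a) →
        ((V ⟨act b x, Submodule.subset_span ⟨b, x, rfl⟩⟩ : R)
          = (l.map fun p => act p.2 (m.V (act (H.S.symm p.1) x))).sum))
      ∧ (∀ u v w : ↥(ARspan act), (u : R) * v = (w : R) → (U w : R) = (U u : R) * v)
      ∧ (∀ u v w : ↥(ARspan act), (u : R) * v = (w : R) → (V w : R) = (u : R) * (V v : R))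
      ∧ (∀ u v : ↥(ARspan act), (V u : R) * v = (u : R) * (U v : R)) := by
  have hμ : Function.Surjective ((lift act).codRestrict _ (lift_mem_ARspan act)) := fun u => by
    obtain ⟨t, ht⟩ := (range_lift_eq_ARspan act).ge u.2
    exact ⟨t, Subtype.ext ht⟩
  obtain ⟨U, V, hU, hV, hU_mul, hV_mul, hUV⟩ := exists_multiplier_of_balanced hμ hAR
    h.toIsPModAlg.mul_mem_ARspan
    ((actU H act a m).codRestrict _ (actU_mem_ARspan H act a m))
    ((actV H act a m).codRestrict _ (actV_mem_ARspan H act a m)) (h.actV_mul_lift a m)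
  refine ⟨U, V, fun b x l hl => ?_, fun b x l hl => ?_, hU_mul, hV_mul, hUV⟩
  · exact congr(Subtype.val $(LinearMap.congr_fun hU (b ⊗ₜ x))).trans
      (actU_tmul_eq_sum H act a m b x l hl)
  · exact congr(Subtype.val $(LinearMap.congr_fun hV (b ⊗ₜ x))).trans
      (actV_tmul_eq_sum H act a m b x l hl)

/-- **Lemma 4.12.**  Let `(R, ·, 𝔢)` be a symmetric partial `A`-module algebra such that
`A·R` has nondegenerate product.  For `m ∈ M(R)` and `a ∈ A`, the pair of linear maps
on `A·R` determined by `(a·m)(b·x) = a₍₁₎·(m(S(a₍₂₎)b·x))` and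
`(b·x)(a·m) = a₍₂₎·((S⁻¹(a₍₁₎)b·x)m)` is a well-defined multiplier:
`a·m ∈ M(A·R)`. -/
theorem extension_to_multiplier_of_AR
    (H : MHA k A) (hR : NondegProd R)
    (act : A →ₗ[k] R →ₗ[k] R) (e : A →ₗ[k] Multiplier k R)
    (h : IsSymPModAlg H R act e)
    (hAR : (∀ u ∈ ARspan act, (∀ v ∈ ARspan act, u * v = 0) → u = 0)
         ∧ ∀ v ∈ ARspan act, (∀ u ∈ ARspan act, u * v = 0) → v = 0)
    (a : A) (m : Multiplier k R) :
    ∃ (U V : ↥(ARspan act) →ₗ[k] ↥(ARspan act)),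
      (∀ (b : A) (x : R) (l : List (A × A)), psum k l = H.T4 (a ⊗ₜ H.S.symm b) →
        ((U ⟨act b x, Submodule.subset_span ⟨b, x, rfl⟩⟩ : R)
          = (l.map fun p => act p.1 (m.U (act (H.S p.2) x))).sum))
      ∧ (∀ (b : A) (x : R) (l : List (A × A)), psum k l = H.T2 (H.S b ⊗ₜ a) →
        ((V ⟨act b x, Submodule.subset_span ⟨b, x, rfl⟩⟩ : R)
          = (l.map fun p => act p.2 (m.V (act (H.S.symm p.1) x))).sum))
      ∧ (∀ u v w : ↥(ARspan act), (u : R) * v = (w : R) → (U w : R) = (U u : R) * v)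
      ∧ (∀ u v w : ↥(ARspan act), (u : R) * v = (w : R) → (V w : R) = (u : R) * (V v : R))
      ∧ (∀ u v : ↥(ARspan act), (V u : R) * v = (u : R) * (U v : R)) :=
  extension_to_multiplier_of_AR_general H act e h hAR a m

end Statements
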